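/- arXiv:1103.2706 — 3 statements merged into one kernel-verified Lean document; each statement's English description precedes it below -/
import Mathlib

section
/- Let N ≥ 1 and m ≥ 1. Let ρ be a pure density matrix on ℂ^N (ρ·ρ = ρ), let σ be a density matrix on ℂ^N, and let (M_μ)_{μ ∈ Fin m} be a Kraus family. Set p_μ := Re tr(M_μ ρ M_μ†) and q_μ := Re tr(M_μ σ M_μ†), and assume q_μ > 0 for every μ with p_μ > 0. For μ with p_μ > 0 define ρ_μ := M_μ ρ M_μ† / p_μ and σ_μ := M_μ σ M_μ† / q_μ. Then Σ_{μ : p_μ > 0} p_μ · Re tr(ρ_μ σ_μ) ≥ Re tr(ρ σ). (Discrete-time analogue of Diósi's result: for a pure true state, the Frobenius inner product between the state and the filter is a sub-martingale.) -/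
open Matrix Finset ComplexOrder

/-- The positive semidefinite square root of a matrix (junk value `0` if the matrix is not
positive semidefinite). -/
noncomputable def matSqrt {N : ℕ} (A : Matrix (Fin N) (Fin N) ℂ) : Matrix (Fin N) (Fin N) ℂ :=
  open scoped Classical MatrixOrder in
  if h : A.PosSemidef then CFC.sqrt A else 0

/-- The fidelity `F(ρ,σ) = Re tr √(√ρ σ √ρ)`. -/
noncomputable def fid {N : ℕ} (ρ σ : Matrix (Fin N) (Fin N) ℂ) : ℝ :=
  ((matSqrt (matSqrt ρ * σ * matSqrt ρ)).trace).re

/-- A density matrix: Hermitian, positive semidefinite, trace one. -/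
def IsDensity {N : ℕ} (ρ : Matrix (Fin N) (Fin N) ℂ) : Prop :=
  ρ.IsHermitian ∧ ρ.PosSemidef ∧ ρ.trace = 1

/-!
Weight matrices by the semi-inner product `⟪X, Y⟫ = tr (Y σ Xᴴ)` of the state `σ`. Since `ρ` is
a Hermitian projection, `tr (ρ σ) = ‖ρ‖²`, and with `A_μ = M_μᴴ M_μ` the outcome terms
`a_μ = Re tr (ρ A_μ σ) = Re ⟪ρ, ρ A_μ⟫` sum to `tr (ρ σ)` by completeness of the Kraus family, while
`‖ρ A_μ‖² = tr (M_μ ρ M_μᴴ M_μ σ M_μᴴ) = p_μ q_μ Re tr (ρ_μ σ_μ)`. Cauchy–Schwarz bounds `a_μ²` by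
`tr (ρ σ) · p_μ q_μ Re tr (ρ_μ σ_μ)`, and Sedrakyan's inequality with the weights `q_μ`, which sum to
at most `1`, gives `tr (ρ σ)² ≤ tr (ρ σ) · ∑ p_μ Re tr (ρ_μ σ_μ)`. Outcomes with `p_μ = 0` have
`M_μ ρ = 0` and contribute nothing.
-/

theorem Finset.sum_le_sum_div_of_sq_le_mul {ι : Type*} {s : Finset ι} {a x q : ι → ℝ}
    (hq : ∀ i ∈ s, 0 < q i) (hq_sum : ∑ i ∈ s, q i ≤ 1) (hx : ∀ i ∈ s, 0 ≤ x i)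
    (ha : ∀ i ∈ s, a i ^ 2 ≤ (∑ j ∈ s, a j) * x i) :
    ∑ i ∈ s, a i ≤ ∑ i ∈ s, x i / q i := by
  set t := ∑ i ∈ s, a i
  have hX : 0 ≤ ∑ i ∈ s, x i / q i := sum_nonneg fun i hi => div_nonneg (hx i hi) (hq i hi).le
  rcases le_or_gt t 0 with ht | ht
  · exact ht.trans hX
  have hq_pos : 0 < ∑ i ∈ s, q i := sum_pos hq (nonempty_of_sum_ne_zero ht.ne')
  suffices t * t ≤ t * ∑ i ∈ s, x i / q i from le_of_mul_le_mul_left this ht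
  calc t * t ≤ t ^ 2 / ∑ i ∈ s, q i := by
        rw [le_div_iff₀ hq_pos, ← sq]
        exact mul_le_of_le_one_right (sq_nonneg t) hq_sum
    _ ≤ ∑ i ∈ s, a i ^ 2 / q i := sq_sum_div_le_sum_sq_div s a hq
    _ ≤ ∑ i ∈ s, t * x i / q i :=
        sum_le_sum fun i hi => div_le_div_of_nonneg_right (ha i hi) (hq i hi).le
    _ = t * ∑ i ∈ s, x i / q i := by simp only [mul_sum, mul_div_assoc]

namespace Matrix

variable {𝕜 n : Type*} [RCLike 𝕜] [Fintype n]

theorem PosSemidef.re_trace_nonneg {A : Matrix n n 𝕜} (hA : A.PosSemidef) :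
    0 ≤ RCLike.re A.trace :=
  (RCLike.nonneg_iff.1 hA.trace_nonneg).1

theorem eq_zero_of_re_trace_mul_conjTranspose_self_nonpos {B : Matrix n n 𝕜}
    (hB : RCLike.re (B * Bᴴ).trace ≤ 0) : B = 0 := by
  obtain ⟨hre, him⟩ := RCLike.nonneg_iff.1 (posSemidef_self_mul_conjTranspose B).trace_nonneg
  rw [← trace_mul_conjTranspose_self_eq_zero_iff]
  exact RCLike.ext (by simpa using hB.antisymm hre) (by simpa using him)

theorem mul_conjTranspose_eq_zero_of_re_trace_nonpos {ρ : Matrix n n 𝕜} (hρh : ρ.IsHermitian)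
    (hρ : IsIdempotentElem ρ) {M : Matrix n n 𝕜} (hM : RCLike.re (M * ρ * Mᴴ).trace ≤ 0) :
    ρ * Mᴴ = 0 := by
  have hMρ : M * ρ * Mᴴ = M * ρ * (M * ρ)ᴴ := by
    rw [conjTranspose_mul, hρh.eq, ← mul_assoc, mul_assoc M ρ ρ, hρ.eq]
  rw [hMρ] at hM
  simpa [conjTranspose_mul, hρh.eq] using
    congrArg conjTranspose (eq_zero_of_re_trace_mul_conjTranspose_self_nonpos hM)

theorem PosSemidef.re_trace_mul_mul_conjTranspose_sq_le {σ : Matrix n n 𝕜}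
    (hσ : σ.PosSemidef) (X Y : Matrix n n 𝕜) :
    RCLike.re (Y * σ * Xᴴ).trace ^ 2 ≤
      RCLike.re (X * σ * Xᴴ).trace * RCLike.re (Y * σ * Yᴴ).trace := by
  let _ := σ.toMatrixSeminormedAddCommGroup hσ
  let _ := σ.toMatrixInnerProductSpace hσ
  calc RCLike.re (inner 𝕜 X Y) ^ 2 ≤ ‖inner 𝕜 X Y‖ * ‖inner 𝕜 Y X‖ := by
        rw [norm_inner_symm Y X, ← sq]
        exact sq_le_sq' (neg_le_of_abs_le (RCLike.abs_re_le_norm _)) (RCLike.re_le_norm _)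
    _ ≤ _ := inner_mul_inner_self_le X Y

theorem trace_mul_mul_conjTranspose_of_isIdempotentElem {ρ : Matrix n n 𝕜}
    (hρh : ρ.IsHermitian) (hρ : IsIdempotentElem ρ) (B σ : Matrix n n 𝕜) :
    (ρ * B * σ * (ρ * B)ᴴ).trace = (ρ * B * σ * Bᴴ).trace := by
  rw [conjTranspose_mul, hρh.eq, ← mul_assoc, trace_mul_comm _ ρ, ← mul_assoc, ← mul_assoc,
    ← mul_assoc, hρ.eq]

theorem PosSemidef.re_trace_mul_mul_conjTranspose_nonneg_of_isIdempotentElem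
    {ρ σ : Matrix n n 𝕜} (hσ : σ.PosSemidef) (hρh : ρ.IsHermitian) (hρ : IsIdempotentElem ρ)
    (B : Matrix n n 𝕜) : 0 ≤ RCLike.re (ρ * B * σ * Bᴴ).trace := by
  rw [← trace_mul_mul_conjTranspose_of_isIdempotentElem hρh hρ]
  exact (hσ.mul_mul_conjTranspose_same (ρ * B)).re_trace_nonneg

theorem PosSemidef.sq_re_trace_mul_le_of_isIdempotentElem {ρ σ : Matrix n n 𝕜}
    (hσ : σ.PosSemidef) (hρh : ρ.IsHermitian) (hρ : IsIdempotentElem ρ) (B : Matrix n n 𝕜) :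
    RCLike.re (ρ * B * σ).trace ^ 2 ≤
      RCLike.re (ρ * σ).trace * RCLike.re (ρ * B * σ * Bᴴ).trace := by
  simpa only [hρh.eq, trace_mul_mul_conjTranspose_of_isIdempotentElem hρh hρ,
    trace_mul_comm _ ρ, ← mul_assoc, hρ.eq] using
    hσ.re_trace_mul_mul_conjTranspose_sq_le ρ (ρ * B)

theorem sum_trace_mul_mul_conjTranspose {R ι : Type*} [CommSemiring R] [StarRing R] [Fintype ι]
    [DecidableEq n] {M : ι → Matrix n n R} (hM : ∑ μ, (M μ)ᴴ * M μ = 1) (σ : Matrix n n R) :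
    ∑ μ, (M μ * σ * (M μ)ᴴ).trace = σ.trace := by
  simp_rw [trace_mul_comm (M _ * σ), ← mul_assoc, ← trace_sum, ← sum_mul, hM, one_mul]

theorem trace_mul_mul_conjTranspose_mul_mul_mul_conjTranspose {R : Type*} [CommSemiring R]
    [StarRing R] (M P Q : Matrix n n R) :
    (M * P * Mᴴ * (M * Q * Mᴴ)).trace = (P * (Mᴴ * M) * Q * (Mᴴ * M)ᴴ).trace := by
  simp only [conjTranspose_mul, conjTranspose_conjTranspose, mul_assoc]
  rw [trace_mul_comm]
  simp only [mul_assoc]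

theorem mul_re_trace_inv_smul_mul_inv_smul {p : ℝ} (hp : p ≠ 0) (q : ℝ) (P Q : Matrix n n ℂ) :
    p * (((p : ℂ)⁻¹ • P) * ((q : ℂ)⁻¹ • Q)).trace.re = (P * Q).trace.re / q := by
  rw [smul_mul_smul_comm, trace_smul, smul_eq_mul, ← Complex.ofReal_inv, ← Complex.ofReal_inv,
    ← Complex.ofReal_mul, Complex.re_ofReal_mul]
  field_simp

end Matrix

theorem frobenius_inner_product_submartingale_pure_general
    (N m : ℕ)
    (ρ σ : Matrix (Fin N) (Fin N) ℂ) (hρ : IsDensity ρ) (hσ : IsDensity σ)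
    (hpure : ρ * ρ = ρ)
    (M : Fin m → Matrix (Fin N) (Fin N) ℂ)
    (hKraus : ∑ μ, (M μ)ᴴ * (M μ) = 1)
    (p q : Fin m → ℝ)
    (hp : ∀ μ, p μ = ((M μ * ρ * (M μ)ᴴ).trace).re)
    (hq : ∀ μ, q μ = ((M μ * σ * (M μ)ᴴ).trace).re)
    (hqpos : ∀ μ, 0 < p μ → 0 < q μ) :
    ((ρ * σ).trace).re ≤
      ∑ μ ∈ Finset.univ.filter (fun μ => 0 < p μ),
        p μ * (((((p μ : ℂ))⁻¹ • (M μ * ρ * (M μ)ᴴ)) *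
                (((q μ : ℂ))⁻¹ • (M μ * σ * (M μ)ᴴ))).trace).re := by
  obtain ⟨hρh, -, -⟩ := hρ
  obtain ⟨-, hσ, hσ_tr⟩ := hσ
  set S := univ.filter fun μ => 0 < p μ
  have hq_sum : ∑ μ ∈ S, q μ ≤ 1 := calc
    ∑ μ ∈ S, q μ ≤ ∑ μ, q μ := sum_le_sum_of_subset_of_nonneg (filter_subset _ _)
      fun μ _ _ => hq μ ▸ (hσ.mul_mul_conjTranspose_same (M μ)).re_trace_nonneg
    _ = 1 := by
      simp only [hq]
      rw [← Complex.re_sum, sum_trace_mul_mul_conjTranspose hKraus, hσ_tr, Complex.one_re]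
  have h_split : ∑ μ ∈ S, (ρ * ((M μ)ᴴ * M μ) * σ).trace.re = (ρ * σ).trace.re := by
    rw [sum_filter_of_ne, ← Complex.re_sum, ← trace_sum, ← sum_mul, ← mul_sum, hKraus, mul_one]
    intro μ _ hμ
    by_contra hp_pos
    have := mul_conjTranspose_eq_zero_of_re_trace_nonpos hρh hpure ((hp μ).symm ▸ not_lt.1 hp_pos)
    simp [← mul_assoc, this] at hμ
  rw [sum_congr rfl fun μ hμ =>
    mul_re_trace_inv_smul_mul_inv_smul (mem_filter.1 hμ).2.ne' (q μ) _ _, ← h_split]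
  refine sum_le_sum_div_of_sq_le_mul (fun μ hμ => hqpos μ (mem_filter.1 hμ).2) hq_sum
    (fun μ _ => ?_) fun μ _ => ?_
  · rw [trace_mul_mul_conjTranspose_mul_mul_mul_conjTranspose]
    exact hσ.re_trace_mul_mul_conjTranspose_nonneg_of_isIdempotentElem hρh hpure _
  · rw [h_split, trace_mul_mul_conjTranspose_mul_mul_mul_conjTranspose]
    exact hσ.sq_re_trace_mul_le_of_isIdempotentElem hρh hpure _

theorem frobenius_inner_product_submartingale_pure
    (N m : ℕ) (hN : 1 ≤ N) (hm : 1 ≤ m)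
    (ρ σ : Matrix (Fin N) (Fin N) ℂ) (hρ : IsDensity ρ) (hσ : IsDensity σ)
    (hpure : ρ * ρ = ρ)
    (M : Fin m → Matrix (Fin N) (Fin N) ℂ)
    (hKraus : ∑ μ, (M μ)ᴴ * (M μ) = 1)
    (p q : Fin m → ℝ)
    (hp : ∀ μ, p μ = ((M μ * ρ * (M μ)ᴴ).trace).re)
    (hq : ∀ μ, q μ = ((M μ * σ * (M μ)ᴴ).trace).re)
    (hqpos : ∀ μ, 0 < p μ → 0 < q μ) :
    ((ρ * σ).trace).re ≤
      ∑ μ ∈ Finset.univ.filter (fun μ => 0 < p μ),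
        p μ * (((((p μ : ℂ))⁻¹ • (M μ * ρ * (M μ)ᴴ)) *
                (((q μ : ℂ))⁻¹ • (M μ * σ * (M μ)ᴴ))).trace).re :=
  frobenius_inner_product_submartingale_pure_general N m ρ σ hρ hσ hpure M hKraus p q hp hq hqpos
end

section
/- Let L be an N×N complex matrix, α ∈ ℝ, and let ρ be an N×N complex matrix with tr(ρ) = 1. Set c₊ := tr((L† + αI)(L + αI)ρ) and c₋ := tr((L† − αI)(L − αI)ρ), and assume c₊ ≠ 0 and c₋ ≠ 0. Define Υ_α(ρ) := (L + αI)ρ(L† + αI)/c₊ − ρ and Υ_{−α}(ρ) := (L − αI)ρ(L† − αI)/c₋ − ρ. Then (1/2)·c₊·Υ_α(ρ) + (1/2)·c₋·Υ_{−α}(ρ) = LρL† − tr(L†Lρ)·ρ. (Exact identity for the mean jump contribution of the two Poisson channels in the homodyne-detection stochastic master equation: all α-dependent terms cancel.) -/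
/-!
Multiplying out, `c₊ Υ_α(ρ) = (L + α)ρ(L† + α) - c₊ ρ`, and the two shifted sandwiches sum to
`2 L ρ L† + 2 α² ρ` while `c₊ + c₋ = 2 tr(L† L ρ) + 2 α² tr ρ`; with `tr ρ = 1` the `α²` terms cancel.
-/

open Matrix

theorem shifted_sandwich_add_shifted_sandwich_neg {K R : Type*} [CommRing K] [Ring R]
    [Algebra K R] (A ρ B : R) (a : K) :
    (A + a • 1) * ρ * (B + a • 1) + (A - a • 1) * ρ * (B - a • 1)
      = (2 : K) • (A * ρ * B + a ^ 2 • ρ) := by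
  simp only [add_mul, mul_add, sub_mul, mul_sub, smul_mul_assoc, mul_smul_comm, one_mul,
    mul_one]
  module

theorem trace_shifted_add_trace_shifted_neg {n R : Type*} [Fintype n] [DecidableEq n]
    [CommRing R] (A B ρ : Matrix n n R) (a : R) :
    ((A + a • 1) * (B + a • 1) * ρ).trace + ((A - a • 1) * (B - a • 1) * ρ).trace
      = 2 * ((A * B * ρ).trace + a ^ 2 * ρ.trace) := by
  have h := shifted_sandwich_add_shifted_sandwich_neg A 1 B a
  simp only [mul_one] at h
  rw [← trace_add, ← add_mul, h, smul_mul_assoc, trace_smul, add_mul, trace_add,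
    smul_mul_assoc, one_mul, trace_smul, smul_eq_mul, smul_eq_mul]

theorem smul_inv_smul_sub {K M : Type*} [Field K] [AddCommGroup M] [Module K M] {c : K}
    (hc : c ≠ 0) (x y : M) : c • (c⁻¹ • x - y) = x - c • y := by
  rw [smul_sub, smul_inv_smul₀ hc]

theorem mean_jump_contribution_identity
    (N : ℕ) (L ρ : Matrix (Fin N) (Fin N) ℂ) (α : ℝ)
    (htr : ρ.trace = 1)
    (cp cm : ℂ)
    (hcp : cp = ((Lᴴ + (α : ℂ) • 1) * (L + (α : ℂ) • 1) * ρ).trace)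
    (hcm : cm = ((Lᴴ - (α : ℂ) • 1) * (L - (α : ℂ) • 1) * ρ).trace)
    (hcp0 : cp ≠ 0) (hcm0 : cm ≠ 0)
    (Υp Υm : Matrix (Fin N) (Fin N) ℂ)
    (hΥp : Υp = cp⁻¹ • ((L + (α : ℂ) • 1) * ρ * (Lᴴ + (α : ℂ) • 1)) - ρ)
    (hΥm : Υm = cm⁻¹ • ((L - (α : ℂ) • 1) * ρ * (Lᴴ - (α : ℂ) • 1)) - ρ) :
    ((1 / 2 : ℂ) * cp) • Υp + ((1 / 2 : ℂ) * cm) • Υm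
      = L * ρ * Lᴴ - ((Lᴴ * L * ρ).trace) • ρ := by
  have hsum := shifted_sandwich_add_shifted_sandwich_neg L ρ Lᴴ (α : ℂ)
  have hc : cp + cm = 2 * ((Lᴴ * L * ρ).trace + (α : ℂ) ^ 2) := by
    rw [hcp, hcm, trace_shifted_add_trace_shifted_neg, htr, mul_one]
  rw [hΥp, hΥm, mul_smul, mul_smul, smul_inv_smul_sub hcp0, smul_inv_smul_sub hcm0]
  linear_combination (norm := module) (1 / 2 : ℂ) • hsum - (hc / 2) • ρ
end

section
/- Let H be a Hermitian N×N complex matrix, L an arbitrary N×N complex matrix, α ∈ ℝ, and ε > 0. Define B := (1/2)(L†L + α²I), M₀ := I − Bε − iHε, M₁ := √(ε/2)·(L + αI), and M₂ := √(ε/2)·(L − αI) (note M₀ equals I − (1/4)(L† + αI)(L + αI)ε − (1/4)(L† − αI)(L − αI)ε − iHε). Then M₀†M₀ + M₁†M₁ + M₂†M₂ = I + ε²·(B² − i(HB − BH) + H²). In particular, the first-order terms in ε cancel exactly, so that M₀†M₀ + M₁†M₁ + M₂†M₂ = I + O(ε²). (The key normalization computation in the Euler–Maruyama discretization of the Poisson-driven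 stochastic master equation, showing the discretization operators form a Kraus family up to second order in the time step.) -/
/-!
Write `M₀ = 1 - ε K` with `K = B + iH`. Since `B` and `H` are self-adjoint, `K† + K = 2B`, so the
first-order part of `M₀†M₀` is `-2εB`. The parallelogram law gives
`M₁†M₁ + M₂†M₂ = (ε/2)·2(L†L + α²) = 2εB`, which cancels it, and what remains is `ε² K†K`.
-/

open Matrix

theorem star_add_mul_add_add_star_sub_mul_sub {R : Type*} [Ring R] [StarRing R] (x y : R) :
    star (x + y) * (x + y) + star (x - y) * (x - y) = 2 * (star x * x + star y * y) := by
  simp only [star_add, star_sub, add_mul, mul_add, sub_mul, mul_sub, two_mul]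
  abel

section StarAlgebra

variable {A : Type*} [Ring A] [StarRing A] [Algebra ℂ A] [StarModule ℂ A]

theorem star_ofReal_smul_mul_self (c : ℝ) (x : A) :
    star ((c : ℂ) • x) * ((c : ℂ) • x) = ((c : ℂ) * c) • (star x * x) := by
  rw [star_smul, Complex.star_def, Complex.conj_ofReal, smul_mul_smul_comm]

theorem star_one_sub_ofReal_smul_mul_self (t : ℝ) (K : A) :
    star (1 - (t : ℂ) • K) * (1 - (t : ℂ) • K)
      = 1 - (t : ℂ) • (star K + K) + ((t : ℂ) ^ 2) • (star K * K) := by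
  rw [star_sub, star_one, star_smul, Complex.star_def, Complex.conj_ofReal]
  simp only [sub_mul, mul_sub, one_mul, mul_one, smul_mul_smul_comm, smul_add]
  rw [sq]
  abel

theorem star_add_I_smul_add_self {B H : A} (hB : IsSelfAdjoint B) (hH : IsSelfAdjoint H) :
    star (B + Complex.I • H) + (B + Complex.I • H) = (2 : ℂ) • B := by
  rw [star_add, star_smul, hB.star_eq, hH.star_eq, Complex.star_def, Complex.conj_I]
  module

theorem star_add_I_smul_mul_self {B H : A} (hB : IsSelfAdjoint B) (hH : IsSelfAdjoint H) :
    star (B + Complex.I • H) * (B + Complex.I • H)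
      = B * B - Complex.I • (H * B - B * H) + H * H := by
  rw [star_add, star_smul, hB.star_eq, hH.star_eq, Complex.star_def, Complex.conj_I]
  simp only [add_mul, mul_add, smul_mul_assoc, mul_smul_comm]
  linear_combination (norm := module) -(Complex.I_sq • (H * H))

end StarAlgebra

theorem kraus_normalization_up_to_second_order
    (N : ℕ) (H L : Matrix (Fin N) (Fin N) ℂ) (hH : H.IsHermitian)
    (α ε : ℝ) (hε : 0 < ε)
    (B M₀ M₁ M₂ : Matrix (Fin N) (Fin N) ℂ)
    (hB : B = (1 / 2 : ℂ) • (Lᴴ * L + ((α : ℂ) ^ 2) • 1))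
    (hM₀ : M₀ = 1 - (ε : ℂ) • B - ((ε : ℂ) * Complex.I) • H)
    (hM₁ : M₁ = ((Real.sqrt (ε / 2) : ℝ) : ℂ) • (L + (α : ℂ) • 1))
    (hM₂ : M₂ = ((Real.sqrt (ε / 2) : ℝ) : ℂ) • (L - (α : ℂ) • 1)) :
    M₀ᴴ * M₀ + M₁ᴴ * M₁ + M₂ᴴ * M₂
      = 1 + ((ε : ℂ) ^ 2) • (B * B - Complex.I • (H * B - B * H) + H * H) := by
  simp only [← star_eq_conjTranspose] at hB ⊢
  have hB_sa : IsSelfAdjoint B := by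
    rw [hB]
    exact .smul (by simp [IsSelfAdjoint])
      ((IsSelfAdjoint.star_mul_self L).add (.smul (by simp [IsSelfAdjoint]) (.one _)))
  have hM₀' : M₀ = 1 - (ε : ℂ) • (B + Complex.I • H) := by
    rw [hM₀, smul_add, mul_smul, sub_sub]
  have hsqrt : ((√(ε / 2) : ℝ) : ℂ) * (√(ε / 2) : ℝ) = ε / 2 := by
    exact_mod_cast Real.mul_self_sqrt (by positivity : 0 ≤ ε / 2)
  have hjumps : star M₁ * M₁ + star M₂ * M₂ = (2 * ε : ℂ) • B := by
    rw [hM₁, hM₂, star_ofReal_smul_mul_self, star_ofReal_smul_mul_self, ← smul_add,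
      star_add_mul_add_add_star_sub_mul_sub, star_ofReal_smul_mul_self, star_one, mul_one, hsqrt,
      hB, two_mul]
    module
  rw [add_assoc, hjumps, hM₀', star_one_sub_ofReal_smul_mul_self, star_add_I_smul_add_self hB_sa hH,
    star_add_I_smul_mul_self hB_sa hH]
  module
end
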